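/- arXiv:2505.13022 — 2 statements merged into one kernel-verified Lean document; each statement's English description precedes it below -/
import Mathlib

section
/- In the monitoring game, assume p_a = p_b = p with 1/3 ≤ p < 1/2 (so p_c = 1 − 2p ≤ p) and (1 − 2p)/(1 − p) < ν* < p/(1 − p). Consider the distribution λ over two-class partitions of {a,b,c} given by λ({{a,c},{b}}) = μ*, λ({{b,c},{a}}) = 1 − μ*, λ({{a,b},{c}}) = 0; the employer's strategy for each partition in the support: control (m = 1) every type in the class containing a and not control (m = 0) every type in the class containing b; and the worker: ζ = 1/2, i.e. e₁(c) = 1/2. Then: the aggregate control probability faced by type c equals μ* (so ζ = 1/2 is a worker best response); for each partition in the support of λ the employer's actions are best responses to the consistent expectations β₁; and both partitions in the support of λ are globally clustered with respect to the worker's behavior, i.e. each minimizes Σ_{ω} p_ω (e₁(ω) − β₁(α(ω)))² over all partitions of {a,b,c} into at most two nonempty classes. Hence this profile is a globally clustered distributional analogy-based expectation equilibrium. -/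
/-- The three worker types of the monitoring game. -/
inductive Typ : Type
  | a | b | c
  deriving DecidableEq

instance : Fintype Typ :=
  ⟨{Typ.a, Typ.b, Typ.c}, fun x => by cases x <;> simp⟩

/-- Probabilities of the worker types. -/
noncomputable def pmap (pa pb pc : ℝ) : Typ → ℝ
  | .a => pa
  | .b => pb
  | .c => pc

/-- Probability of high effort of each worker type, when type `c` chooses low effort
with probability `ζ`. -/
noncomputable def emap (ζ : ℝ) : Typ → ℝ
  | .a => 0
  | .b => 1
  | .c => 1 - ζ

/-- The analogy class (fiber) of type `ω` under the two-class partition encoded by `g`. -/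
def cls (g : Typ → Bool) (ω : Typ) : Finset Typ :=
  Finset.univ.filter fun ω' => g ω' = g ω

/-- The employer's analogy-based expectation of high effort on the class `α`. -/
noncomputable def beta1 (p e : Typ → ℝ) (α : Finset Typ) : ℝ :=
  (∑ ω ∈ α, p ω * e ω) / ∑ ω ∈ α, p ω

/-- The partition `{{a,c},{b}}`: `a, c ↦ true`, `b ↦ false`. -/
def gac : Typ → Bool
  | .b => false
  | _ => true

/-- The partition `{{b,c},{a}}`: `b, c ↦ true`, `a ↦ false`. -/
def gbc : Typ → Bool
  | .a => false
  | _ => true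

/-- Employer control probabilities under partition `{{a,c},{b}}`:
control the class containing `a`, do not control the class containing `b`. -/
noncomputable def mac : Typ → ℝ
  | .b => 0
  | _ => 1

/-- Employer control probabilities under partition `{{b,c},{a}}`:
control the class containing `a`, do not control the class containing `b`. -/
noncomputable def mbc : Typ → ℝ
  | .a => 1
  | _ => 0

/-- Total weighted squared prediction error of the partition `g` given worker
behavior `e`. -/
noncomputable def Vtot (p e : Typ → ℝ) (g : Typ → Bool) : ℝ :=
  ∑ ω, p ω * (e ω - beta1 p e (cls g ω)) ^ 2

/-!
With efforts `e = (0, 1, 1/2)`, the prediction error of a partition is the sum of the weighted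
within-class variances. Pooling `c` with `a` or with `b` costs `p (1 - 2p) / (4 (1 - p))` in
either case, since `p_a = p_b` and `e(c)` lies midway between `e(a)` and `e(b)`; isolating `c`
or pooling everything costs `p / 2`, which is larger because `p_c < 2 (1 - p)`. The class
`{a, c}` expects effort `(1 - 2p) / (2 (1 - p)) < ν*` and the class `{b, c}` expects
`1 / (2 (1 - p)) > ν*`, so controlling the class of `a` and not that of `b` is a best response,
and type `c` is then controlled exactly when `{{a,c},{b}}` is drawn, i.e. with probability `μ*`.
-/

lemma sum_typ (f : Typ → ℝ) : ∑ ω, f ω = f .a + f .b + f .c := by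
  rw [show (Finset.univ : Finset Typ) = {.a, .b, .c} from rfl, Finset.sum_insert (by decide),
    Finset.sum_pair (by decide), add_assoc]

lemma beta1_singleton {p : Typ → ℝ} (e : Typ → ℝ) {x : Typ} (hx : p x ≠ 0) :
    beta1 p e {x} = e x := by
  rw [beta1, Finset.sum_singleton, Finset.sum_singleton, mul_div_cancel_left₀ _ hx]

lemma beta1_pair (p e : Typ → ℝ) {x y : Typ} (hxy : x ≠ y) :
    beta1 p e {x, y} = (p x * e x + p y * e y) / (p x + p y) := by
  rw [beta1, Finset.sum_pair hxy, Finset.sum_pair hxy]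

lemma Vtot_eq (p e : Typ → ℝ) (g : Typ → Bool) :
    Vtot p e g = p .a * (e .a - beta1 p e (cls g .a)) ^ 2
      + p .b * (e .b - beta1 p e (cls g .b)) ^ 2 + p .c * (e .c - beta1 p e (cls g .c)) ^ 2 :=
  sum_typ _

lemma Vtot_congr_cls (p e : Typ → ℝ) {g g' : Typ → Bool} (h : cls g = cls g') :
    Vtot p e g = Vtot p e g' := by
  simp only [Vtot, h]

def gab : Typ → Bool
  | .c => false
  | _ => true

lemma cls_cases (g : Typ → Bool) :
    cls g = cls gac ∨ cls g = cls gbc ∨ cls g = cls gab ∨ cls g = cls fun _ => true := by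
  revert g
  decide

section SymmetricPrior

variable {p : ℝ}

lemma beta1_ac (hp : p ≠ 1) :
    beta1 (pmap p p (1 - 2 * p)) (emap (1 / 2)) {.a, .c} = (1 - 2 * p) / (2 * (1 - p)) := by
  have : 1 - p ≠ 0 := sub_ne_zero.mpr hp.symm
  rw [beta1_pair _ _ (by decide)]
  simp only [pmap, emap]
  rw [show p + (1 - 2 * p) = 1 - p by ring]
  field_simp
  ring

lemma beta1_bc (hp : p ≠ 1) :
    beta1 (pmap p p (1 - 2 * p)) (emap (1 / 2)) {.b, .c} = 1 / (2 * (1 - p)) := by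
  have : 1 - p ≠ 0 := sub_ne_zero.mpr hp.symm
  rw [beta1_pair _ _ (by decide)]
  simp only [pmap, emap]
  rw [show p + (1 - 2 * p) = 1 - p by ring]
  field_simp
  ring

lemma beta1_ab (hp : p ≠ 0) :
    beta1 (pmap p p (1 - 2 * p)) (emap (1 / 2)) {.a, .b} = 1 / 2 := by
  rw [beta1_pair _ _ (by decide)]
  simp only [pmap, emap]
  field_simp
  ring

lemma beta1_univ : beta1 (pmap p p (1 - 2 * p)) (emap (1 / 2)) Finset.univ = 1 / 2 := by
  rw [beta1, sum_typ, sum_typ]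
  simp only [pmap, emap]
  ring

lemma Vtot_gac (hp0 : p ≠ 0) (hp1 : p ≠ 1) :
    Vtot (pmap p p (1 - 2 * p)) (emap (1 / 2)) gac = p * (1 - 2 * p) / (4 * (1 - p)) := by
  have : 1 - p ≠ 0 := sub_ne_zero.mpr hp1.symm
  rw [Vtot_eq, show cls gac .a = {.a, .c} by decide, show cls gac .b = {.b} by decide,
    show cls gac .c = {.a, .c} by decide, beta1_ac hp1, beta1_singleton _ hp0]
  simp only [pmap, emap]
  field_simp
  ring

lemma Vtot_gbc (hp0 : p ≠ 0) (hp1 : p ≠ 1) :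
    Vtot (pmap p p (1 - 2 * p)) (emap (1 / 2)) gbc = p * (1 - 2 * p) / (4 * (1 - p)) := by
  have : 1 - p ≠ 0 := sub_ne_zero.mpr hp1.symm
  rw [Vtot_eq, show cls gbc .a = {.a} by decide, show cls gbc .b = {.b, .c} by decide,
    show cls gbc .c = {.b, .c} by decide, beta1_bc hp1, beta1_singleton _ hp0]
  simp only [pmap, emap]
  field_simp
  ring

lemma Vtot_gab (hp0 : p ≠ 0) (hp2 : 1 - 2 * p ≠ 0) :
    Vtot (pmap p p (1 - 2 * p)) (emap (1 / 2)) gab = p / 2 := by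
  rw [Vtot_eq, show cls gab .a = {.a, .b} by decide, show cls gab .b = {.a, .b} by decide,
    show cls gab .c = {.c} by decide, beta1_ab hp0, beta1_singleton _ hp2]
  simp only [pmap, emap]
  ring

lemma Vtot_const : Vtot (pmap p p (1 - 2 * p)) (emap (1 / 2)) (fun _ => true) = p / 2 := by
  rw [Vtot_eq, show cls (fun _ => true) .a = Finset.univ by decide,
    show cls (fun _ => true) .b = Finset.univ by decide,
    show cls (fun _ => true) .c = Finset.univ by decide, beta1_univ]
  simp only [pmap, emap]
  ring

lemma le_Vtot (hp0 : 0 < p) (hp2 : p < 1 / 2) (g : Typ → Bool) :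
    p * (1 - 2 * p) / (4 * (1 - p)) ≤ Vtot (pmap p p (1 - 2 * p)) (emap (1 / 2)) g := by
  have hp1 : p ≠ 1 := by linarith
  have hle : p * (1 - 2 * p) / (4 * (1 - p)) ≤ p / 2 := by
    rw [div_le_iff₀ (by linarith)]
    nlinarith
  rcases cls_cases g with h | h | h | h <;> rw [Vtot_congr_cls _ _ h]
  · exact (Vtot_gac hp0.ne' hp1).ge
  · exact (Vtot_gbc hp0.ne' hp1).ge
  · exact (Vtot_gab hp0.ne' (by linarith)).symm ▸ hle
  · exact Vtot_const.symm ▸ hle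

end SymmetricPrior

section BestResponse

variable {p ν : ℝ}

lemma mac_best_response (hp0 : p ≠ 0) (hp1 : p ≠ 1)
    (hlo : (1 - 2 * p) / (2 * (1 - p)) < ν) (hhi : ν < 1) (ω : Typ) :
    (beta1 (pmap p p (1 - 2 * p)) (emap (1 / 2)) (cls gac ω) < ν ∧ mac ω = 1) ∨
      (ν < beta1 (pmap p p (1 - 2 * p)) (emap (1 / 2)) (cls gac ω) ∧ mac ω = 0) := by
  cases ω
  · rw [show cls gac .a = {.a, .c} by decide, beta1_ac hp1]
    exact .inl ⟨hlo, rfl⟩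
  · rw [show cls gac .b = {.b} by decide, beta1_singleton _ hp0]
    exact .inr ⟨hhi, rfl⟩
  · rw [show cls gac .c = {.a, .c} by decide, beta1_ac hp1]
    exact .inl ⟨hlo, rfl⟩

lemma mbc_best_response (hp0 : p ≠ 0) (hp1 : p ≠ 1)
    (hlo : 0 < ν) (hhi : ν < 1 / (2 * (1 - p))) (ω : Typ) :
    (beta1 (pmap p p (1 - 2 * p)) (emap (1 / 2)) (cls gbc ω) < ν ∧ mbc ω = 1) ∨
      (ν < beta1 (pmap p p (1 - 2 * p)) (emap (1 / 2)) (cls gbc ω) ∧ mbc ω = 0) := by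
  cases ω
  · rw [show cls gbc .a = {.a} by decide, beta1_singleton _ hp0]
    exact .inl ⟨hlo, rfl⟩
  · rw [show cls gbc .b = {.b, .c} by decide, beta1_bc hp1]
    exact .inr ⟨hhi, rfl⟩
  · rw [show cls gbc .c = {.b, .c} by decide, beta1_bc hp1]
    exact .inr ⟨hhi, rfl⟩

end BestResponse

theorem monitoring_globally_clustered_distributional_ABEE_general
    (p : ℝ) (hp1 : 1 / 3 ≤ p) (hp2 : p < 1 / 2)
    (μs νs : ℝ)
    (hν_lo : (1 - 2 * p) / (1 - p) < νs) (hν_hi : νs < p / (1 - p)) :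
    -- aggregate control probability faced by type c equals μ*
    (μs * mac Typ.c + (1 - μs) * mbc Typ.c = μs) ∧
    -- employer best responses under partition {{a,c},{b}}
    (∀ ω, (beta1 (pmap p p (1 - 2 * p)) (emap (1 / 2)) (cls gac ω) < νs ∧ mac ω = 1) ∨
          (νs < beta1 (pmap p p (1 - 2 * p)) (emap (1 / 2)) (cls gac ω) ∧ mac ω = 0)) ∧
    -- employer best responses under partition {{b,c},{a}}
    (∀ ω, (beta1 (pmap p p (1 - 2 * p)) (emap (1 / 2)) (cls gbc ω) < νs ∧ mbc ω = 1) ∨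
          (νs < beta1 (pmap p p (1 - 2 * p)) (emap (1 / 2)) (cls gbc ω) ∧ mbc ω = 0)) ∧
    -- both partitions in the support of λ are globally clustered:
    -- each minimizes the total squared prediction error over all partitions of
    -- {a,b,c} into at most two nonempty classes
    (∀ g' : Typ → Bool,
      Vtot (pmap p p (1 - 2 * p)) (emap (1 / 2)) gac ≤
        Vtot (pmap p p (1 - 2 * p)) (emap (1 / 2)) g') ∧
    (∀ g' : Typ → Bool,
      Vtot (pmap p p (1 - 2 * p)) (emap (1 / 2)) gbc ≤
        Vtot (pmap p p (1 - 2 * p)) (emap (1 / 2)) g') := by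
  have hp0 : 0 < p := by linarith
  have hp_ne_one : p ≠ 1 := by linarith
  have h1p : 0 < 1 - p := by linarith
  have hν_ac : (1 - 2 * p) / (2 * (1 - p)) < νs :=
    lt_of_le_of_lt (div_le_div_of_nonneg_left (by linarith) h1p (by linarith)) hν_lo
  have hν_bc : νs < 1 / (2 * (1 - p)) :=
    hν_hi.trans (by rw [div_lt_div_iff₀ h1p (by linarith)]; nlinarith)
  have hν0 : 0 < νs := (div_pos (by linarith) h1p).trans hν_lo
  have hν1 : νs < 1 := hν_hi.trans (by rw [div_lt_one h1p]; linarith)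
  refine ⟨by simp [mac, mbc], mac_best_response hp0.ne' hp_ne_one hν_ac hν1,
    mbc_best_response hp0.ne' hp_ne_one hν0 hν_bc, fun g => ?_, fun g => ?_⟩
  · rw [Vtot_gac hp0.ne' hp_ne_one]
    exact le_Vtot hp0 hp2 g
  · rw [Vtot_gbc hp0.ne' hp_ne_one]
    exact le_Vtot hp0 hp2 g

/-- **The unique globally clustered distributional ABEE of the monitoring game**
(Proposition 5), for `p_a = p_b = p` with `1/3 ≤ p < 1/2` (so `p_c = 1 - 2p ≤ p`) and
`(1-2p)/(1-p) < ν* < p/(1-p)`.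

With `λ({{a,c},{b}}) = μ*`, `λ({{b,c},{a}}) = 1 - μ*` (and `λ({{a,b},{c}}) = 0`), the
employer controlling the class containing `a` and not the class containing `b`, and the
`c` worker choosing `e = 0` and `e = 1` each with probability `1/2`:
the aggregate control probability faced by type `c` equals `μ*` (so `ζ = 1/2` is a worker
best response), for each partition in the support the employer's actions are best
responses to the consistent expectations `β₁`, and both partitions in the support are
globally clustered with respect to the worker's behavior. -/
theorem monitoring_globally_clustered_distributional_ABEE
    (p : ℝ) (hp1 : 1 / 3 ≤ p) (hp2 : p < 1 / 2)
    (μs νs : ℝ) (hμ0 : 0 < μs) (hμ1 : μs < 1)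
    (hν_lo : (1 - 2 * p) / (1 - p) < νs) (hν_hi : νs < p / (1 - p)) :
    -- aggregate control probability faced by type c equals μ*
    (μs * mac Typ.c + (1 - μs) * mbc Typ.c = μs) ∧
    -- employer best responses under partition {{a,c},{b}}
    (∀ ω, (beta1 (pmap p p (1 - 2 * p)) (emap (1 / 2)) (cls gac ω) < νs ∧ mac ω = 1) ∨
          (νs < beta1 (pmap p p (1 - 2 * p)) (emap (1 / 2)) (cls gac ω) ∧ mac ω = 0)) ∧
    -- employer best responses under partition {{b,c},{a}}
    (∀ ω, (beta1 (pmap p p (1 - 2 * p)) (emap (1 / 2)) (cls gbc ω) < νs ∧ mbc ω = 1) ∨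
          (νs < beta1 (pmap p p (1 - 2 * p)) (emap (1 / 2)) (cls gbc ω) ∧ mbc ω = 0)) ∧
    -- both partitions in the support of λ are globally clustered:
    -- each minimizes the total squared prediction error over all partitions of
    -- {a,b,c} into at most two nonempty classes
    (∀ g' : Typ → Bool,
      Vtot (pmap p p (1 - 2 * p)) (emap (1 / 2)) gac ≤
        Vtot (pmap p p (1 - 2 * p)) (emap (1 / 2)) g') ∧
    (∀ g' : Typ → Bool,
      Vtot (pmap p p (1 - 2 * p)) (emap (1 / 2)) gbc ≤
        Vtot (pmap p p (1 - 2 * p)) (emap (1 / 2)) g') :=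
  monitoring_globally_clustered_distributional_ABEE_general p hp1 hp2 μs νs hν_lo hν_hi
end

section
/- Existence of an equidistant-expectations partition: let f : [0,1] → ℝ be a continuous, strictly positive probability density and let K ≥ 2 be an integer. Then there exists a strictly increasing sequence 0 = μ₀ < μ₁ < ⋯ < μ_K = 1 such that for every k = 1, …, K−1: μ_k − E[μ | (μ_{k−1}, μ_k]] = E[μ | (μ_k, μ_{k+1}]] − μ_k. -/
/-!
Extend `f` continuously to a function `G` on `ℝ` with `0 < m ≤ G ≤ M`. For `t < u` one has
`E[μ | (t, u]] - t ≥ m (u - t) / (2M)`, so `u ↦ E[μ | (t, u]]` is a continuous, strictly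
increasing map of `(t, ∞)` onto itself. Hence, once `μ_{k-1} < μ_k` are fixed, the equidistance
condition at `μ_k` has a unique solution `μ_{k+1} > μ_k`, depending continuously on
`(μ_{k-1}, μ_k)`. Shooting from `μ₀ = 0, μ₁ = a` gives `μ_K` continuous in `a > 0`. The growth
bound yields `m μ_{k+1} ≤ (m + 2M) μ_k`, so `μ_K < 1` for small `a`, while for
`a = (1 + E[μ | (0, 1]]) / 2` already `μ₂ > 1`. The intermediate value theorem gives `μ_K = 1`,
and on `[0, 1]` the conditional means of `G` are those of `f`.
-/

open MeasureTheory Set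

/-- Conditional mean of `μ` on the interval `(s, t]` under the density `f`. -/
noncomputable def condMu (f : ℝ → ℝ) (s t : ℝ) : ℝ :=
  (∫ x in Ioc s t, x * f x) / ∫ x in Ioc s t, f x

open Filter Topology

theorem div_lt_add_div_add {a b c d : ℝ} (hb : 0 < b) (hd : 0 < d) (h : a / b < c / d) :
    a / b < (a + c) / (b + d) := by
  rw [div_lt_div_iff₀ hb hd] at h
  rw [div_lt_div_iff₀ hb (add_pos hb hd)]
  nlinarith

theorem condMu_congr {f g : ℝ → ℝ} {s t : ℝ} (h : EqOn f g (Ioc s t)) :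
    condMu f s t = condMu g s t := by
  unfold condMu
  rw [setIntegral_congr_fun measurableSet_Ioc h,
    setIntegral_congr_fun measurableSet_Ioc fun x hx => congrArg (x * ·) (h hx)]

theorem condMu_eq_intervalIntegral (G : ℝ → ℝ) {s t : ℝ} (h : s ≤ t) :
    condMu G s t = (∫ x in s..t, x * G x) / ∫ x in s..t, G x := by
  rw [condMu, intervalIntegral.integral_of_le h, intervalIntegral.integral_of_le h]

theorem continuous_intervalIntegral_prod {G : ℝ → ℝ} (hG : Continuous G) :
    Continuous fun p : ℝ × ℝ => ∫ x in p.1..p.2, G x := by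
  have hprim := intervalIntegral.continuous_primitive (μ := volume) hG.intervalIntegrable 0
  have hdiff (p : ℝ × ℝ) : ∫ x in p.1..p.2, G x = (∫ x in 0..p.2, G x) - ∫ x in 0..p.1, G x :=
    (intervalIntegral.integral_interval_sub_left (hG.intervalIntegrable _ _)
      (hG.intervalIntegrable _ _)).symm
  simp only [hdiff]
  exact (hprim.comp continuous_snd).sub (hprim.comp continuous_fst)

section PositiveDensity

variable {G : ℝ → ℝ} (hG : Continuous G) (hGpos : ∀ x, 0 < G x)
include hG

theorem condMu_sub_eq {s t : ℝ} (h : s ≤ t) (c : ℝ) (hD : ∫ x in s..t, G x ≠ 0) :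
    condMu G s t - c = (∫ x in s..t, (x - c) * G x) / ∫ x in s..t, G x := by
  have hsplit : ∫ x in s..t, (x - c) * G x = (∫ x in s..t, x * G x) - c * ∫ x in s..t, G x := by
    simp only [sub_mul]
    rw [intervalIntegral.integral_sub
      ((by fun_prop : Continuous fun x => x * G x).intervalIntegrable _ _)
      ((by fun_prop : Continuous fun x => c * G x).intervalIntegrable _ _),
      intervalIntegral.integral_const_mul]
  rw [condMu_eq_intervalIntegral G h, hsplit, sub_div, mul_div_cancel_right₀ _ hD]

theorem condMu_eq_add_div_add {s t u : ℝ} (hst : s ≤ t) (htu : t ≤ u) :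
    condMu G s u = ((∫ x in s..t, x * G x) + ∫ x in t..u, x * G x) /
      ((∫ x in s..t, G x) + ∫ x in t..u, G x) := by
  have hxG : Continuous fun x => x * G x := by fun_prop
  rw [condMu_eq_intervalIntegral G (hst.trans htu),
    intervalIntegral.integral_add_adjacent_intervals (hxG.intervalIntegrable _ _)
      (hxG.intervalIntegrable _ _),
    intervalIntegral.integral_add_adjacent_intervals (hG.intervalIntegrable _ _)
      (hG.intervalIntegrable _ _)]

include hGpos

theorem intervalIntegral_density_pos {s t : ℝ} (h : s < t) : 0 < ∫ x in s..t, G x :=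
  intervalIntegral.intervalIntegral_pos_of_pos_on (hG.intervalIntegrable _ _)
    (fun x _ => hGpos x) h

theorem lt_condMu {s t : ℝ} (h : s < t) : s < condMu G s t := by
  have hD := intervalIntegral_density_pos hG hGpos h
  have hN : 0 < ∫ x in s..t, (x - s) * G x :=
    intervalIntegral.intervalIntegral_pos_of_pos_on
      ((by fun_prop : Continuous fun x => (x - s) * G x).intervalIntegrable _ _)
      (fun x hx => mul_pos (sub_pos.2 hx.1) (hGpos x)) h
  exact sub_pos.1 (condMu_sub_eq hG h.le s hD.ne' ▸ div_pos hN hD)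

theorem condMu_lt {s t : ℝ} (h : s < t) : condMu G s t < t := by
  have hD := intervalIntegral_density_pos hG hGpos h
  have hN : 0 < ∫ x in s..t, (t - x) * G x :=
    intervalIntegral.intervalIntegral_pos_of_pos_on
      ((by fun_prop : Continuous fun x => (t - x) * G x).intervalIntegrable _ _)
      (fun x hx => mul_pos (sub_pos.2 hx.2) (hGpos x)) h
  have hN' : ∫ x in s..t, (x - t) * G x < 0 := by
    rw [← neg_pos, ← intervalIntegral.integral_neg]
    simpa only [← neg_mul, neg_sub] using hN
  exact sub_neg.1 (condMu_sub_eq hG h.le t hD.ne' ▸ div_neg_of_neg_of_pos hN' hD)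

theorem condMu_lt_condMu_right {s t u : ℝ} (hst : s < t) (htu : t < u) :
    condMu G s t < condMu G s u := by
  have hmeans : condMu G s t < condMu G t u :=
    (condMu_lt hG hGpos hst).trans (lt_condMu hG hGpos htu)
  rw [condMu_eq_intervalIntegral G hst.le, condMu_eq_intervalIntegral G htu.le] at hmeans
  rw [condMu_eq_add_div_add hG hst.le htu.le, condMu_eq_intervalIntegral G hst.le]
  exact div_lt_add_div_add (intervalIntegral_density_pos hG hGpos hst)
    (intervalIntegral_density_pos hG hGpos htu) hmeans

theorem strictMonoOn_condMu (t : ℝ) : StrictMonoOn (condMu G t) (Ioi t) :=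
  fun _ hu _ _ huv => condMu_lt_condMu_right hG hGpos hu huv

theorem continuousAt_condMu {p : ℝ × ℝ} (h : p.1 < p.2) :
    ContinuousAt (fun q : ℝ × ℝ => condMu G q.1 q.2) p := by
  have hquot : ContinuousAt
      (fun q : ℝ × ℝ => (∫ x in q.1..q.2, x * G x) / ∫ x in q.1..q.2, G x) p :=
    ((continuous_intervalIntegral_prod (by fun_prop)).continuousAt).div
      (continuous_intervalIntegral_prod hG).continuousAt
      (intervalIntegral_density_pos hG hGpos h).ne'
  refine hquot.congr ?_
  filter_upwards [continuous_fst.continuousAt.eventually_lt continuous_snd.continuousAt h]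
    with q hq using (condMu_eq_intervalIntegral G hq.le).symm

theorem mul_sub_le_condMu_sub {m M : ℝ} (hmG : ∀ x, m ≤ G x) (hGM : ∀ x, G x ≤ M)
    {t u : ℝ} (h : t < u) : m * (u - t) ≤ 2 * M * (condMu G t u - t) := by
  have hD := intervalIntegral_density_pos hG hGpos h
  have hDle : ∫ x in t..u, G x ≤ M * (u - t) :=
    calc ∫ x in t..u, G x ≤ ∫ _ in t..u, M :=
          intervalIntegral.integral_mono_on h.le (hG.intervalIntegrable _ _)
            intervalIntegrable_const fun x _ => hGM x
      _ = M * (u - t) := by rw [intervalIntegral.integral_const, smul_eq_mul, mul_comm]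
  have hNge : m * (u - t) ^ 2 / 2 ≤ ∫ x in t..u, (x - t) * G x :=
    calc m * (u - t) ^ 2 / 2 = ∫ x in t..u, (x - t) * m := by
          rw [intervalIntegral.integral_mul_const,
            intervalIntegral.integral_comp_sub_right (fun x => x), integral_id]
          ring
      _ ≤ ∫ x in t..u, (x - t) * G x :=
          intervalIntegral.integral_mono_on h.le
            ((by fun_prop : Continuous fun x => (x - t) * m).intervalIntegrable _ _)
            ((by fun_prop : Continuous fun x => (x - t) * G x).intervalIntegrable _ _)
            fun x hx => mul_le_mul_of_nonneg_left (hmG x) (sub_nonneg.2 hx.1)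
  have hM : 0 < M := (hGpos t).trans_le (hGM t)
  have hN : 0 < ∫ x in t..u, (x - t) * G x := by
    have := lt_condMu hG hGpos h
    rw [← sub_pos, condMu_sub_eq hG h.le t hD.ne'] at this
    exact (div_pos_iff_of_pos_right hD).1 this
  rw [condMu_sub_eq hG h.le t hD.ne', mul_div_assoc', le_div_iff₀ hD]
  rcases le_or_gt m 0 with hm | hm
  · nlinarith [mul_nonpos_of_nonpos_of_nonneg hm (sub_pos.2 h).le]
  · nlinarith [mul_le_mul_of_nonneg_left hDle (mul_nonneg hm.le (sub_pos.2 h).le)]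

end PositiveDensity

theorem continuousAt_of_strictMonoOn_apply_eq {X : Type*} [TopologicalSpace X]
    {F : X → ℝ → ℝ} {ℓ c φ : X → ℝ} {x₀ : X} (hℓ : ContinuousAt ℓ x₀) (hc : ContinuousAt c x₀)
    (hF : ∀ u, ℓ x₀ < u → ContinuousAt (F · u) x₀) (hmono : ∀ x, StrictMonoOn (F x) (Ioi (ℓ x)))
    (hφ : ∀ᶠ x in 𝓝 x₀, ℓ x < φ x ∧ F x (φ x) = c x) : ContinuousAt φ x₀ := by
  obtain ⟨hℓφ₀, hFφ₀⟩ := hφ.self_of_nhds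
  rw [ContinuousAt, tendsto_order]
  constructor
  · intro v hv
    set w := max v ((ℓ x₀ + φ x₀) / 2)
    have hℓw : ℓ x₀ < w := lt_max_of_lt_right (by linarith)
    have hwφ : w < φ x₀ := max_lt hv (by linarith)
    have hFw : F x₀ w < c x₀ := hFφ₀ ▸ hmono x₀ hℓw hℓφ₀ hwφ
    filter_upwards [hφ, (hF w hℓw).eventually_lt hc hFw,
      hℓ.eventually_lt continuousAt_const hℓw] with x ⟨hℓφ, hFφ⟩ hFwx hℓwx
    exact (le_max_left _ _).trans_lt <| ((hmono x).lt_iff_lt hℓwx hℓφ).1 (hFφ ▸ hFwx)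
  · intro v hv
    have hℓv : ℓ x₀ < v := hℓφ₀.trans hv
    have hFv : c x₀ < F x₀ v := hFφ₀ ▸ hmono x₀ hℓφ₀ hℓv hv
    filter_upwards [hφ, hc.eventually_lt (hF v hℓv) hFv,
      hℓ.eventually_lt continuousAt_const hℓv] with x ⟨hℓφ, hFφ⟩ hFvx hℓvx
    exact ((hmono x).lt_iff_lt hℓφ hℓvx).1 (hFφ ▸ hFvx)

-- The fallback value `t` is never used: a solution exists whenever `s < t`.
open Classical in
noncomputable def nextCutoff (G : ℝ → ℝ) (s t : ℝ) : ℝ :=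
  if h : ∃ u, t < u ∧ condMu G t u = 2 * t - condMu G s t then h.choose else t

section BoundedDensity

variable {G : ℝ → ℝ} {m M : ℝ} (hG : Continuous G) (hm : 0 < m) (hmG : ∀ x, m ≤ G x)
  (hGM : ∀ x, G x ≤ M)
include hG hm hmG hGM

theorem exists_condMu_eq {t τ : ℝ} (h : t < τ) : ∃ u, t < u ∧ condMu G t u = τ := by
  have hGpos x : 0 < G x := hm.trans_le (hmG x)
  have hM : 0 < M := (hGpos 0).trans_le (hGM 0)
  set u₁ := t + 2 * M * (τ - t) / m
  have ht₁ : t < u₁ := lt_add_of_pos_right t (by have := sub_pos.2 h; positivity)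
  have hτ₁ : τ ≤ condMu G t u₁ := by
    have hgrowth := mul_sub_le_condMu_sub hG hGpos hmG hGM ht₁
    have hu₁ : m * (u₁ - t) = 2 * M * (τ - t) := by
      simp only [u₁]; field_simp; ring
    nlinarith
  have hsub : uIcc τ u₁ ⊆ Ioi t := fun u hu => (lt_min h ht₁).trans_le hu.1
  have hcont : ContinuousOn (condMu G t) (uIcc τ u₁) := fun u hu =>
    ((continuousAt_condMu hG hGpos (p := (t, u)) (hsub hu)).comp
      (Continuous.prodMk_right t).continuousAt).continuousWithinAt
  obtain ⟨u, hu, hτu⟩ := intermediate_value_uIcc hcont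
    ⟨min_le_of_left_le (condMu_lt hG hGpos h).le, le_max_of_le_right hτ₁⟩
  exact ⟨u, hsub hu, hτu⟩

theorem nextCutoff_spec {s t : ℝ} (h : s < t) :
    t < nextCutoff G s t ∧ condMu G t (nextCutoff G s t) = 2 * t - condMu G s t := by
  have hex := exists_condMu_eq hG hm hmG hGM
    (show t < 2 * t - condMu G s t by linarith [condMu_lt hG (fun x => hm.trans_le (hmG x)) h])
  rw [nextCutoff, dif_pos hex]
  exact hex.choose_spec

theorem continuousAt_nextCutoff {p : ℝ × ℝ} (h : p.1 < p.2) :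
    ContinuousAt (fun q : ℝ × ℝ => nextCutoff G q.1 q.2) p := by
  have hGpos x : 0 < G x := hm.trans_le (hmG x)
  refine continuousAt_of_strictMonoOn_apply_eq (F := fun q : ℝ × ℝ => condMu G q.2)
    (c := fun q => 2 * q.2 - condMu G q.1 q.2) continuous_snd.continuousAt
    ((continuous_const.mul continuous_snd).continuousAt.sub (continuousAt_condMu hG hGpos h))
    (fun u hu => (continuousAt_condMu hG hGpos (p := (p.2, u)) hu).comp
      (f := fun q : ℝ × ℝ => (q.2, u)) (by fun_prop))
    (fun q => strictMonoOn_condMu hG hGpos q.2) ?_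
  filter_upwards [continuous_fst.continuousAt.eventually_lt continuous_snd.continuousAt h]
    with q hq using nextCutoff_spec hG hm hmG hGM hq

noncomputable def cutoffSeq (G : ℝ → ℝ) (a : ℝ) : ℕ → ℝ
  | 0 => 0
  | 1 => a
  | n + 2 => nextCutoff G (cutoffSeq G a n) (cutoffSeq G a (n + 1))

variable {a : ℝ}

theorem cutoffSeq_lt_succ (ha : 0 < a) (n : ℕ) :
    cutoffSeq G a n < cutoffSeq G a (n + 1) := by
  induction n with
  | zero => exact ha
  | succ n ih => exact (nextCutoff_spec hG hm hmG hGM ih).1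

theorem strictMono_cutoffSeq (ha : 0 < a) : StrictMono (cutoffSeq G a) :=
  strictMono_nat_of_lt_succ (cutoffSeq_lt_succ hG hm hmG hGM ha)

theorem condMu_cutoffSeq_add_two (ha : 0 < a) (n : ℕ) :
    condMu G (cutoffSeq G a (n + 1)) (cutoffSeq G a (n + 2)) =
      2 * cutoffSeq G a (n + 1) - condMu G (cutoffSeq G a n) (cutoffSeq G a (n + 1)) :=
  (nextCutoff_spec hG hm hmG hGM (cutoffSeq_lt_succ hG hm hmG hGM ha n)).2

theorem continuousAt_cutoffSeq (ha : 0 < a) (n : ℕ) :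
    ContinuousAt (fun b => cutoffSeq G b n) a := by
  induction n using Nat.twoStepInduction with
  | zero => exact continuousAt_const
  | one => exact continuousAt_id
  | more n ih₀ ih₁ =>
    exact (continuousAt_nextCutoff hG hm hmG hGM (cutoffSeq_lt_succ hG hm hmG hGM ha n)).comp
      (f := fun b => (cutoffSeq G b n, cutoffSeq G b (n + 1))) (ih₀.prodMk ih₁)

theorem mul_cutoffSeq_add_two_le (ha : 0 < a) (n : ℕ) :
    m * cutoffSeq G a (n + 2) ≤ (m + 2 * M) * cutoffSeq G a (n + 1) := by
  have hGpos x : 0 < G x := hm.trans_le (hmG x)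
  have hgrowth :=
    mul_sub_le_condMu_sub hG hGpos hmG hGM (cutoffSeq_lt_succ hG hm hmG hGM ha (n + 1))
  have hnonneg : 0 ≤ cutoffSeq G a n := by
    simpa [cutoffSeq] using (strictMono_cutoffSeq hG hm hmG hGM ha).monotone n.zero_le
  have hmean := lt_condMu hG hGpos (cutoffSeq_lt_succ hG hm hmG hGM ha n)
  rw [condMu_cutoffSeq_add_two hG hm hmG hGM ha] at hgrowth
  nlinarith [(hGpos 0).trans_le (hGM 0)]

theorem pow_mul_cutoffSeq_succ_le (ha : 0 < a) (n : ℕ) :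
    m ^ n * cutoffSeq G a (n + 1) ≤ (m + 2 * M) ^ n * a := by
  induction n with
  | zero => simp [cutoffSeq]
  | succ n ih =>
    calc m ^ (n + 1) * cutoffSeq G a (n + 2)
        = m ^ n * (m * cutoffSeq G a (n + 2)) := by ring
      _ ≤ m ^ n * ((m + 2 * M) * cutoffSeq G a (n + 1)) :=
        mul_le_mul_of_nonneg_left (mul_cutoffSeq_add_two_le hG hm hmG hGM ha n) (by positivity)
      _ ≤ (m + 2 * M) * ((m + 2 * M) ^ n * a) := by
        rw [mul_left_comm]
        exact mul_le_mul_of_nonneg_left ih (by linarith [hmG 0, hGM 0])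
      _ = (m + 2 * M) ^ (n + 1) * a := by ring

theorem one_lt_cutoffSeq_two : 1 < cutoffSeq G ((1 + condMu G 0 1) / 2) 2 := by
  have hGpos x : 0 < G x := hm.trans_le (hmG x)
  set a₁ := (1 + condMu G 0 1) / 2 with ha₁def
  have hmean₀ := lt_condMu hG hGpos one_pos
  have hmean₁ := condMu_lt hG hGpos one_pos
  have ha₁ : 0 < a₁ := by linarith
  have hstep := condMu_cutoffSeq_add_two hG hm hmG hGM ha₁ 0
  have hlt := condMu_lt hG hGpos (cutoffSeq_lt_succ hG hm hmG hGM ha₁ 1)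
  have hmono := condMu_lt_condMu_right hG hGpos ha₁ (show a₁ < 1 by linarith)
  simp only [cutoffSeq] at hstep hlt ⊢
  linarith

theorem exists_cutoffSeq_eq_one {K : ℕ} (hK : 2 ≤ K) : ∃ a, 0 < a ∧ cutoffSeq G a K = 1 := by
  have hGpos x : 0 < G x := hm.trans_le (hmG x)
  have hM : 0 < M := (hGpos 0).trans_le (hGM 0)
  set a₁ := (1 + condMu G 0 1) / 2 with ha₁def
  have ha₁ : 0 < a₁ := by linarith [lt_condMu hG hGpos one_pos]
  obtain ⟨n, rfl⟩ : ∃ n, K = n + 1 := ⟨K - 1, by omega⟩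
  set a₀ := min a₁ (m ^ n / (2 * (m + 2 * M) ^ n))
  have ha₀ : 0 < a₀ := lt_min ha₁ (by positivity)
  have hlow : cutoffSeq G a₀ (n + 1) < 1 := by
    have hbound := pow_mul_cutoffSeq_succ_le hG hm hmG hGM ha₀ n
    have ha₀le : (m + 2 * M) ^ n * a₀ ≤ m ^ n / 2 := by
      rw [← le_div_iff₀' (by positivity), div_div]
      exact min_le_right _ _
    by_contra! hge
    nlinarith [pow_pos hm n]
  have hhigh : 1 < cutoffSeq G a₁ (n + 1) :=
    (one_lt_cutoffSeq_two hG hm hmG hGM).trans_le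
      ((strictMono_cutoffSeq hG hm hmG hGM ha₁).monotone hK)
  obtain ⟨a, ha, hμa⟩ := intermediate_value_Icc (min_le_left _ _)
    (fun b hb =>
      (continuousAt_cutoffSeq hG hm hmG hGM (ha₀.trans_le hb.1) _).continuousWithinAt)
    ⟨hlow.le, hhigh.le⟩
  exact ⟨a, ha₀.trans_le ha.1, hμa⟩

end BoundedDensity

theorem exists_continuous_extension_of_pos {f : ℝ → ℝ} {a b : ℝ} (hab : a ≤ b)
    (hf : ContinuousOn f (Icc a b)) (hpos : ∀ x ∈ Icc a b, 0 < f x) :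
    ∃ (G : ℝ → ℝ) (m M : ℝ), Continuous G ∧ EqOn G f (Icc a b) ∧ 0 < m ∧
      (∀ x, m ≤ G x) ∧ ∀ x, G x ≤ M := by
  obtain ⟨xm, hxm, hmin⟩ := isCompact_Icc.exists_isMinOn (nonempty_Icc.2 hab) hf
  obtain ⟨xM, -, hmax⟩ := isCompact_Icc.exists_isMaxOn (nonempty_Icc.2 hab) hf
  refine ⟨IccExtend hab ((Icc a b).domRestrict f), f xm, f xM,
    continuous_IccExtend_iff.2 hf.domRestrict, fun x hx => IccExtend_of_mem hab _ hx, hpos xm hxm,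
    fun x => isMinOn_iff.1 hmin _ (projIcc a b hab x).2,
    fun x => isMaxOn_iff.1 hmax _ (projIcc a b hab x).2⟩

theorem exists_equidistant_expectations_partition_general
    (f : ℝ → ℝ) (hf : ContinuousOn f (Icc 0 1))
    (hfpos : ∀ x ∈ Icc (0 : ℝ) 1, 0 < f x)
    (K : ℕ) (hK : 2 ≤ K) :
    ∃ m : ℕ → ℝ,
      m 0 = 0 ∧ m K = 1 ∧ (∀ k < K, m k < m (k + 1)) ∧
      ∀ k, 1 ≤ k → k < K →
        m k - condMu f (m (k - 1)) (m k) = condMu f (m k) (m (k + 1)) - m k := by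
  obtain ⟨G, m, M, hG, hGf, hm, hmG, hGM⟩ :=
    exists_continuous_extension_of_pos zero_le_one hf hfpos
  obtain ⟨a, ha, haK⟩ := exists_cutoffSeq_eq_one hG hm hmG hGM hK
  have hmono := strictMono_cutoffSeq hG hm hmG hGM ha
  have hcondMu : ∀ j < K, condMu f (cutoffSeq G a j) (cutoffSeq G a (j + 1)) =
      condMu G (cutoffSeq G a j) (cutoffSeq G a (j + 1)) := fun j hj =>
    condMu_congr fun x hx => (hGf ⟨(hmono.monotone j.zero_le).trans hx.1.le,
      haK ▸ hx.2.trans (hmono.monotone hj)⟩).symm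
  refine ⟨cutoffSeq G a, rfl, haK, fun k _ => cutoffSeq_lt_succ hG hm hmG hGM ha k, ?_⟩
  intro k hk hkK
  obtain ⟨n, rfl⟩ : ∃ n, k = n + 1 := ⟨k - 1, by omega⟩
  rw [Nat.add_sub_cancel, hcondMu n (by omega), hcondMu (n + 1) hkK]
  linarith [condMu_cutoffSeq_add_two hG hm hmG hGM ha n]

/-- **Existence of an equidistant-expectations partition** (Lemma 3): for every
continuous, strictly positive probability density `f` on `[0, 1]` and every `K ≥ 2`,
there is a strictly increasing sequence `0 = μ₀ < μ₁ < ⋯ < μ_K = 1` such that each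
interior cutoff `μ_k` is equidistant from the conditional means of the two adjacent
intervals:
`μ_k - E[μ | (μ_{k-1}, μ_k]] = E[μ | (μ_k, μ_{k+1}]] - μ_k` for `k = 1, …, K-1`. -/
theorem exists_equidistant_expectations_partition
    (f : ℝ → ℝ) (hf : ContinuousOn f (Icc 0 1))
    (hfpos : ∀ x ∈ Icc (0 : ℝ) 1, 0 < f x)
    (hf1 : (∫ x in Icc (0 : ℝ) 1, f x) = 1)
    (K : ℕ) (hK : 2 ≤ K) :
    ∃ m : ℕ → ℝ,
      m 0 = 0 ∧ m K = 1 ∧ (∀ k < K, m k < m (k + 1)) ∧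
      ∀ k, 1 ≤ k → k < K →
        m k - condMu f (m (k - 1)) (m k) = condMu f (m k) (m (k + 1)) - m k :=
  exists_equidistant_expectations_partition_general f hf hfpos K hK
end
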